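/- The function ρ defined via the dyadic enumeration is left-continuous at every point of ℝ. -/
import Mathlib


/-- `x` is a dyadic rational in `[a, b]`. -/
def IsDyadicIn (a b x : ℝ) : Prop :=
  x ∈ Set.Icc a b ∧ ∃ m n : ℕ, x = (m : ℝ) / 2 ^ n

theorem stmt1 (r : ℕ → ℝ) (hr_inj : Function.Injective r)
    (hr_range : Set.range r = {x : ℝ | IsDyadicIn 0 1 x})
    (ρ : ℝ → ℝ)
    (hρ0 : ∀ x : ℝ, x ≤ 0 → ρ x = 0)
    (hρ1 : ∀ x : ℝ, 0 < x → x ≤ 1 →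
      ρ x = ∑' k : ℕ, (if x ≤ r k then ((1 : ℝ) / 2) ^ (k + 1) else 0))
    (hρ2 : ∀ x : ℝ, 1 < x → ρ x = 1) :
    ∀ x : ℝ, Filter.Tendsto ρ (nhdsWithin x (Set.Iio x)) (nhds (ρ x)) := by
  intro x
  rcases le_or_gt x 0 with hx0 | hx0
  · have heq : ρ =ᶠ[nhdsWithin x (Set.Iio x)] fun _ => ρ x := by
      filter_upwards [self_mem_nhdsWithin] with y hy
      rw [hρ0 y (le_of_lt (lt_of_lt_of_le hy hx0)), hρ0 x hx0]
    exact Filter.Tendsto.congr' heq.symm tendsto_const_nhds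
  rcases lt_or_ge 1 x with hx1 | hx1
  · have heq : ρ =ᶠ[nhdsWithin x (Set.Iio x)] fun _ => ρ x := by
      filter_upwards [Ioo_mem_nhdsLT_of_mem (Set.mem_Ioc.2 ⟨hx1, le_refl x⟩)] with y hy
      rw [hρ2 y hy.1, hρ2 x hx1]
    exact Filter.Tendsto.congr' heq.symm tendsto_const_nhds
  -- main case 0 < x ≤ 1
  set g : ℕ → ℝ := fun k => ((1:ℝ)/2)^(k+1) with hgdef
  have hgpos : ∀ k, (0:ℝ) ≤ g k := fun k => by positivity
  have hg : Summable g := by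
    have h2 : Summable (fun n : ℕ => ((1:ℝ)/2)^n) :=
      summable_geometric_of_lt_one (by norm_num) (by norm_num)
    exact (summable_nat_add_iff 1).2 h2
  rw [Metric.tendsto_nhds]
  intro ε hε
  obtain ⟨K, hK⟩ : ∃ K : ℕ, (∑' i : ℕ, g (i + K)) < ε := by
    have htail : Filter.Tendsto (fun K => ∑' i : ℕ, g (i + K)) Filter.atTop (nhds 0) :=
      tendsto_sum_nat_add g
    exact (htail.eventually_lt_const hε).exists
  have h1 : Set.Ioo 0 x ∈ nhdsWithin x (Set.Iio x) :=
    Ioo_mem_nhdsLT_of_mem (Set.mem_Ioc.2 ⟨hx0, le_refl x⟩)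
  have h2 : ∀ᶠ y in nhdsWithin x (Set.Iio x), ∀ k ∈ Finset.range K, r k < x → r k < y := by
    rw [Filter.eventually_all_finset]
    intro k _
    by_cases hrk : r k < x
    · filter_upwards [Ioo_mem_nhdsLT_of_mem (Set.mem_Ioc.2 ⟨hrk, le_refl x⟩)] with y hy
      exact fun _ => hy.1
    · filter_upwards with y hy; exact absurd hy hrk
  filter_upwards [h1, h2] with y hy hy2
  set a : ℕ → ℝ := fun k => if y ≤ r k then g k else 0 with hadef
  set b : ℕ → ℝ := fun k => if x ≤ r k then g k else 0 with hbdef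
  have hale : ∀ k, a k ≤ g k := by
    intro k; simp only [hadef]; split <;> simp [hgpos k]
  have hbnn : ∀ k, 0 ≤ b k := by
    intro k; simp only [hbdef]; split <;> simp [hgpos k]
  have hann : ∀ k, 0 ≤ a k := by
    intro k; simp only [hadef]; split <;> simp [hgpos k]
  have ha : Summable a := Summable.of_nonneg_of_le hann hale hg
  have hble : ∀ k, b k ≤ g k := by
    intro k; simp only [hbdef]; split <;> simp [hgpos k]
  have hb : Summable b := Summable.of_nonneg_of_le hbnn hble hg
  have hba : ∀ k, b k ≤ a k := by
    intro k
    simp only [hadef, hbdef]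
    by_cases hx : x ≤ r k
    · simp [hx, le_trans hy.2.le hx]
    · simp only [hx, if_false]
      split <;> simp [hgpos k]
  have hρy : ρ y = ∑' k, a k := hρ1 y hy.1 (le_trans hy.2.le hx1)
  have hρx : ρ x = ∑' k, b k := hρ1 x hx0 hx1
  have hFle : (∑' k, b k) ≤ ∑' k, a k := Summable.tsum_le_tsum hba hb ha
  rw [hρy, hρx, Real.dist_eq, abs_of_nonneg (sub_nonneg.2 hFle), ← Summable.tsum_sub ha hb]
  set d : ℕ → ℝ := fun k => a k - b k with hddef
  have hd : Summable d := ha.sub hb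
  have hd0 : ∀ k ∈ Finset.range K, d k = 0 := by
    intro k hk
    simp only [hddef, hadef, hbdef]
    by_cases hx : x ≤ r k
    · simp [hx, le_trans hy.2.le hx]
    · have hry : r k < y := hy2 k hk (lt_of_not_ge hx)
      simp [hx, not_le.2 hry]
  have hsplit := (Summable.sum_add_tsum_nat_add K hd).symm
  have hsum0 : (∑ i ∈ Finset.range K, d i) = 0 := Finset.sum_eq_zero hd0
  rw [hsum0, zero_add] at hsplit
  have hdle : ∀ i, d (i + K) ≤ g (i + K) := by
    intro i
    simp only [hddef]
    have := hale (i + K)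
    have := hbnn (i + K)
    linarith
  calc (∑' k, d k) = ∑' i, d (i + K) := hsplit
    _ ≤ ∑' i, g (i + K) := Summable.tsum_le_tsum hdle ((summable_nat_add_iff K).2 hd)
        ((summable_nat_add_iff K).2 hg)
    _ < ε := hK
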